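/- arXiv:1907.03368 — 2 statements merged into one kernel-verified Lean document; each statement's English description precedes it below -/
import Mathlib

section
/- Let X : [0,1] → H(2) be a smooth curve with X(0)=0 and X(1)=diag(α,β) where α > 0 and β < 0, whose trace-norm length equals ‖X(1)‖₁. Then X(t) is a diagonal matrix for every t ∈ [0,1]. -/
open scoped ComplexOrder
open scoped Matrix

/-- The trace norm (Schatten 1-norm) of a complex matrix: `‖A‖₁ = tr |A|`. -/
noncomputable def traceNorm {m p : Type*} [Fintype m] [Fintype p] [DecidableEq p]
    (A : Matrix m p ℂ) : ℝ :=
  ((((Matrix.posSemidef_conjTranspose_mul_self A).1.eigenvectorUnitary : Matrix p p ℂ) *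
      Matrix.diagonal (((↑) : ℝ → ℂ) ∘ (√·) ∘ (Matrix.posSemidef_conjTranspose_mul_self A).1.eigenvalues) *
      (star (Matrix.posSemidef_conjTranspose_mul_self A).1.eigenvectorUnitary : Matrix p p ℂ)).trace).re

noncomputable def tnQ (A : Matrix (Fin 2) (Fin 2) ℂ) : ℝ :=
  (A 0 0).re^2 + (A 1 1).re^2 + 2*Complex.normSq (A 0 1)
    + 2*|(A 0 0).re*(A 1 1).re - Complex.normSq (A 0 1)|

lemma my_ch2 (M : Matrix (Fin 2) (Fin 2) ℂ) :
    M * M = (M 0 0 + M 1 1) • M - (M 0 0 * M 1 1 - M 0 1 * M 1 0) • (1 : Matrix (Fin 2) (Fin 2) ℂ) := by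
  ext i j
  fin_cases i <;> fin_cases j <;>
    simp [Matrix.mul_apply, Fin.sum_univ_two, Matrix.one_apply] <;> ring

lemma my_sqrt_ge (a d m : ℝ) (hm : 0 ≤ m) :
    a - d ≤ Real.sqrt (a^2 + d^2 + 2*m + 2*|a*d - m|) := by
  rcases le_or_gt (a - d) 0 with h | h
  · exact h.trans (Real.sqrt_nonneg _)
  · rw [show a - d = Real.sqrt ((a-d)^2) by rw [Real.sqrt_sq_eq_abs, abs_of_pos h]]
    apply Real.sqrt_le_sqrt
    nlinarith [le_abs_self (m - a*d), abs_sub_comm (a*d) m]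

lemma my_eq_case (a d m : ℝ) (hm : 0 ≤ m)
    (h : Real.sqrt (a^2 + d^2 + 2*m + 2*|a*d - m|) = a - d) : m = 0 := by
  have hN : (0:ℝ) ≤ a^2 + d^2 + 2*m + 2*|a*d - m| := by
    have := abs_nonneg (a*d - m); positivity
  have hsq : a^2 + d^2 + 2*m + 2*|a*d - m| = (a-d)^2 := by
    have := Real.sq_sqrt hN
    rw [h] at this; linarith [this]
  have h2 : m - a*d ≤ |a*d - m| := by rw [abs_sub_comm]; exact le_abs_self _
  nlinarith

lemma traceNorm_eq_sqrt (A : Matrix (Fin 2) (Fin 2) ℂ) (hA : A.IsHermitian) :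
    traceNorm A = Real.sqrt (tnQ A) := by
  set a := (A 0 0).re with ha
  set d := (A 1 1).re with hd
  set b := A 0 1 with hb
  set m := Complex.normSq b with hm
  have hA00 : A 0 0 = (a : ℂ) := (hA.coe_re_apply_self 0).symm
  have hA11 : A 1 1 = (d : ℂ) := (hA.coe_re_apply_self 1).symm
  have hA10 : A 1 0 = (starRingEnd ℂ) b := by
    rw [hb, ← hA.apply 1 0, RCLike.star_def]
  have hMM : Aᴴ * A = A * A := by rw [hA.eq]
  set p := |a * d - m| with hp
  set q := a^2 + d^2 + 2*m with hq
  have hqQ : tnQ A = q + 2*p := by rw [tnQ, hq, hp]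
  have hp0 : 0 ≤ p := abs_nonneg _
  have hm0 : 0 ≤ m := Complex.normSq_nonneg b
  set c : ℂ := ((p:ℝ):ℂ) with hcdef
  have hbc : b * (starRingEnd ℂ) b = (m : ℂ) := Complex.mul_conj b
  have hcb : (starRingEnd ℂ) b * b = (m : ℂ) := by rw [mul_comm]; exact hbc
  have hM00 : (A * A) 0 0 = (a:ℂ)*(a:ℂ) + (m:ℂ) := by
    rw [Matrix.mul_apply, Fin.sum_univ_two, hA00, hA10, hbc]
  have hM11 : (A * A) 1 1 = (m:ℂ) + (d:ℂ)*(d:ℂ) := by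
    rw [Matrix.mul_apply, Fin.sum_univ_two, hA11, hA10, hcb]
  have hM01 : (A * A) 0 1 = (a:ℂ)*b + b*(d:ℂ) := by
    rw [Matrix.mul_apply, Fin.sum_univ_two, hA00, hA11]
  have hM10 : (A * A) 1 0 = (starRingEnd ℂ) b *(a:ℂ) + (d:ℂ)*(starRingEnd ℂ) b := by
    rw [Matrix.mul_apply, Fin.sum_univ_two, hA00, hA11, hA10]
  have htr : (A * A) 0 0 + (A * A) 1 1 = ((q:ℝ):ℂ) := by
    rw [hM00, hM11, hq]; push_cast; ring
  have hdet : (A * A) 0 0 * (A * A) 1 1 - (A * A) 0 1 * (A * A) 1 0 = c^2 := by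
    have hps : c^2 = (((a*d-m:ℝ)):ℂ)^2 := by
      rw [hcdef, hp]; norm_cast; exact sq_abs _
    rw [hM00, hM11, hM01, hM10, hps]
    push_cast
    linear_combination (-(((a:ℂ))+((d:ℂ)))^2) * hbc
  have hPSD := Matrix.posSemidef_conjTranspose_mul_self A
  set ev := hPSD.1.eigenvalues with hev
  have he0 : 0 ≤ ev 0 := hPSD.eigenvalues_nonneg 0
  have he1 : 0 ≤ ev 1 := hPSD.eigenvalues_nonneg 1
  have hsum : ev 0 + ev 1 = q := by
    have := hPSD.1.trace_eq_sum_eigenvalues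
    have ht : (Aᴴ * A).trace = ((q:ℝ):ℂ) := by rw [hMM, Matrix.trace_fin_two, htr]
    rw [Fin.sum_univ_two, ht] at this
    exact Complex.ofReal_injective (by push_cast; exact this.symm)
  have hprod : ev 0 * ev 1 = p^2 := by
    have := hPSD.1.det_eq_prod_eigenvalues
    have hd2 : (Aᴴ * A).det = c^2 := by rw [hMM, Matrix.det_fin_two, hdet]
    rw [Fin.prod_univ_two, hd2, hcdef] at this
    exact Complex.ofReal_injective (by push_cast; exact this.symm)
  have htn : traceNorm A = Real.sqrt (ev 0) + Real.sqrt (ev 1) := by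
    rw [traceNorm, Matrix.trace_mul_cycle, Unitary.coe_star_mul_self, Matrix.one_mul,
      Matrix.trace_diagonal, Fin.sum_univ_two]
    simp [hev]
  rw [htn, hqQ]
  have hs : Real.sqrt (ev 0) * Real.sqrt (ev 1) = p := by
    rw [← Real.sqrt_mul he0, hprod, Real.sqrt_sq hp0]
  rw [eq_comm, Real.sqrt_eq_iff_mul_self_eq (by positivity) (by positivity)]
  nlinarith [Real.mul_self_sqrt he0, Real.mul_self_sqrt he1]

/-- If `X : [0,1] → H(2)` is a smooth minimal curve (for the trace norm) joining `0`
to `diag(α, β)` with `α > 0 > β`, then `X(t)` is diagonal for every `t ∈ [0,1]`. -/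
theorem diagonal_of_minimal_mixed_sign_diag
    (X X' : ℝ → Matrix (Fin 2) (Fin 2) ℂ) (α β : ℝ)
    (hsmooth : ∀ i j, ContDiff ℝ (⊤ : ℕ∞) fun t => X t i j)
    (hderiv : ∀ t i j, HasDerivAt (fun s => X s i j) (X' t i j) t)
    (hherm : ∀ t, (X t).IsHermitian)
    (h0 : X 0 = 0) (h1 : X 1 = Matrix.diagonal ![(α : ℂ), (β : ℂ)])
    (hα : 0 < α) (hβ : β < 0)
    (hmin : (∫ t in (0:ℝ)..1, traceNorm (X' t)) = traceNorm (X 1)) :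
    ∀ t ∈ Set.Icc (0:ℝ) 1, ∀ i j, i ≠ j → X t i j = 0 := by
  -- continuity of the entries of X'
  have hc : ∀ i j, Continuous fun t => X' t i j := by
    intro i j
    have he : (fun t => X' t i j) = deriv (fun s => X s i j) :=
      funext fun t => ((hderiv t i j).deriv).symm
    rw [he]
    exact (hsmooth i j).continuous_deriv (by simp)
  -- X' t is Hermitian
  have hX'herm : ∀ t, (X' t).IsHermitian := by
    intro t
    have key : ∀ i j, star (X' t j i) = X' t i j := by
      intro i j
      have hstar : HasDerivAt (fun s => star (X s j i)) (star (X' t j i)) t :=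
        (hderiv t j i).star
      have h2 : (fun s => star (X s j i)) = fun s => X s i j :=
        funext fun s => (hherm s).apply i j
      rw [h2] at hstar
      exact hstar.unique (hderiv t i j)
    ext i j
    rw [Matrix.conjTranspose_apply]
    exact key i j
  have hTN : ∀ t, traceNorm (X' t) = Real.sqrt (tnQ (X' t)) :=
    fun t => traceNorm_eq_sqrt _ (hX'herm t)
  -- continuity of t ↦ √(tnQ (X' t))
  have hcQ : Continuous fun t => tnQ (X' t) := by
    have c00 : Continuous fun t => (X' t 0 0).re := Complex.continuous_re.comp (hc 0 0)
    have c11 : Continuous fun t => (X' t 1 1).re := Complex.continuous_re.comp (hc 1 1)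
    have c01 : Continuous fun t => Complex.normSq (X' t 0 1) :=
      Complex.continuous_normSq.comp (hc 0 1)
    exact (((c00.pow 2).add (c11.pow 2)).add (continuous_const.mul c01)).add
      (continuous_const.mul ((c00.mul c11).sub c01).abs)
  have hcs : Continuous fun t => Real.sqrt (tnQ (X' t)) := Real.continuous_sqrt.comp hcQ
  have hcre : Continuous fun t => (X' t 0 0).re - (X' t 1 1).re :=
    (Complex.continuous_re.comp (hc 0 0)).sub (Complex.continuous_re.comp (hc 1 1))
  -- the gap function
  set g : ℝ → ℝ := fun t => Real.sqrt (tnQ (X' t)) - ((X' t 0 0).re - (X' t 1 1).re) with hgdef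
  have hgcont : Continuous g := hcs.sub hcre
  have hg0 : ∀ t, 0 ≤ g t := by
    intro t
    have h := my_sqrt_ge (X' t 0 0).re (X' t 1 1).re (Complex.normSq (X' t 0 1))
      (Complex.normSq_nonneg _)
    have : (X' t 0 0).re - (X' t 1 1).re ≤ Real.sqrt (tnQ (X' t)) := h
    simp only [hgdef]
    linarith
  -- FTC for the entries
  have hftc : ∀ (u : ℝ) i j, (∫ s in (0:ℝ)..u, X' s i j) = X u i j - X 0 i j := by
    intro u i j
    exact intervalIntegral.integral_eq_sub_of_hasDerivAt (fun s _ => hderiv s i j)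
      ((hc i j).intervalIntegrable 0 u)
  -- FTC for the real diagonal difference
  have hre : ∀ t : ℝ, HasDerivAt (fun s => (X s 0 0).re - (X s 1 1).re)
      ((X' t 0 0).re - (X' t 1 1).re) t := by
    intro t
    exact (Complex.reCLM.hasFDerivAt.comp_hasDerivAt t (hderiv t 0 0)).sub
      (Complex.reCLM.hasFDerivAt.comp_hasDerivAt t (hderiv t 1 1))
  have hI2 : (∫ t in (0:ℝ)..1, ((X' t 0 0).re - (X' t 1 1).re)) = α - β := by
    rw [intervalIntegral.integral_eq_sub_of_hasDerivAt (fun s _ => hre s)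
      (hcre.intervalIntegrable 0 1)]
    rw [h0, h1]
    simp
  -- trace norm of the endpoint
  have hTN1 : traceNorm (X 1) = α - β := by
    rw [traceNorm_eq_sqrt _ (hherm 1), h1]
    have hQ1 : tnQ (Matrix.diagonal ![(α:ℂ), (β:ℂ)]) = (α - β)^2 := by
      rw [tnQ]
      simp
      rw [abs_of_neg hβ, abs_of_pos hα]
      ring
    rw [hQ1, Real.sqrt_sq (by linarith)]
  -- the integral of g vanishes
  have hgint : (∫ t in (0:ℝ)..1, g t) = 0 := by
    have hsplit : (∫ t in (0:ℝ)..1, g t)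
        = (∫ t in (0:ℝ)..1, Real.sqrt (tnQ (X' t)))
          - ∫ t in (0:ℝ)..1, ((X' t 0 0).re - (X' t 1 1).re) := by
      rw [← intervalIntegral.integral_sub (hcs.intervalIntegrable 0 1)
        (hcre.intervalIntegrable 0 1)]
    have hfirst : (∫ t in (0:ℝ)..1, Real.sqrt (tnQ (X' t))) = traceNorm (X 1) := by
      rw [← hmin]
      apply intervalIntegral.integral_congr
      intro s _
      exact (hTN s).symm
    rw [hsplit, hfirst, hI2, hTN1]
    ring
  -- hence g vanishes identically on [0,1]
  have hgz : ∀ t ∈ Set.Icc (0:ℝ) 1, g t = 0 := by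
    intro t₀ ht₀
    by_contra hne
    have hpos : 0 < g t₀ := lt_of_le_of_ne (hg0 t₀) (Ne.symm hne)
    obtain ⟨δ, hδ0, hδ⟩ := Metric.continuousAt_iff.mp (hgcont.continuousAt (x := t₀))
      (g t₀ / 2) (half_pos hpos)
    set u := max 0 (t₀ - δ/2) with hu
    set v := min 1 (t₀ + δ/2) with hv
    have hu0 : (0:ℝ) ≤ u := le_max_left _ _
    have hv1 : v ≤ 1 := min_le_left _ _
    have huv : u < v := by
      rcases ht₀ with ⟨h0t, ht1⟩
      apply max_lt <;> apply lt_min <;> linarith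
    have hlow : ∀ s ∈ Set.Icc u v, g t₀ / 2 ≤ g s := by
      intro s hs
      rcases hs with ⟨hsu, hsv⟩
      have h1' : t₀ - δ/2 ≤ s := le_trans (le_max_right _ _) hsu
      have h2' : s ≤ t₀ + δ/2 := le_trans hsv (min_le_right _ _)
      have hd : dist s t₀ < δ := by
        rw [Real.dist_eq, abs_lt]
        constructor <;> linarith
      have := hδ hd
      rw [Real.dist_eq, abs_lt] at this
      linarith [this.1, this.2]
    have hIuv : g t₀ / 2 * (v - u) ≤ ∫ s in u..v, g s := by
      have := intervalIntegral.integral_mono_on (μ := MeasureTheory.volume)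
        (f := fun _ => g t₀ / 2) (g := g) huv.le
        (intervalIntegrable_const) (hgcont.intervalIntegrable u v) hlow
      rwa [intervalIntegral.integral_const, smul_eq_mul, mul_comm] at this
    have h0u : (0:ℝ) ≤ ∫ s in (0:ℝ)..u, g s :=
      intervalIntegral.integral_nonneg hu0 (fun s _ => hg0 s)
    have hv1' : (0:ℝ) ≤ ∫ s in v..1, g s :=
      intervalIntegral.integral_nonneg hv1 (fun s _ => hg0 s)
    have hadd1 : (∫ s in (0:ℝ)..u, g s) + (∫ s in u..1, g s) = ∫ s in (0:ℝ)..1, g s :=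
      intervalIntegral.integral_add_adjacent_intervals (hgcont.intervalIntegrable 0 u)
        (hgcont.intervalIntegrable u 1)
    have hadd2 : (∫ s in u..v, g s) + (∫ s in v..1, g s) = ∫ s in u..1, g s :=
      intervalIntegral.integral_add_adjacent_intervals (hgcont.intervalIntegrable u v)
        (hgcont.intervalIntegrable v 1)
    have : 0 < g t₀ / 2 * (v - u) := by
      apply mul_pos (half_pos hpos) (by linarith)
    rw [hgint] at hadd1
    linarith
  -- equality case : off-diagonal entries of X' vanish on [0,1]
  have hX'od : ∀ t ∈ Set.Icc (0:ℝ) 1, X' t 0 1 = 0 := by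
    intro t ht
    have h := hgz t ht
    have heq : Real.sqrt (tnQ (X' t)) = (X' t 0 0).re - (X' t 1 1).re := by
      simp only [hgdef] at h
      linarith
    have hm := my_eq_case (X' t 0 0).re (X' t 1 1).re (Complex.normSq (X' t 0 1))
      (Complex.normSq_nonneg _) heq
    exact Complex.normSq_eq_zero.mp hm
  -- conclude
  intro t ht i j hij
  have h01 : X t 0 1 = 0 := by
    have hIg := hftc t 0 1
    have hz : (∫ s in (0:ℝ)..t, X' s 0 1) = 0 := by
      rw [intervalIntegral.integral_congr (g := fun _ => (0:ℂ)) ?_,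
        intervalIntegral.integral_zero]
      intro s hs
      rcases ht with ⟨ht0, ht1⟩
      rw [Set.uIcc_of_le ht0] at hs
      exact hX'od s ⟨hs.1, hs.2.trans ht1⟩
    rw [hz, h0] at hIg
    have h00 : (0 : Matrix (Fin 2) (Fin 2) ℂ) 0 1 = 0 := rfl
    rw [h00] at hIg
    linear_combination -hIg
  have h10 : X t 1 0 = 0 := by
    rw [← (hherm t).apply 1 0, h01, star_zero]
  fin_cases i <;> fin_cases j <;> first
    | exact absurd rfl hij
    | exact h01
    | exact h10
end

section
/- Let S₁, S₂, S₃ be an orthogonal decomposition of ℂⁿ, let P : [0,1] → H(S₁) be a smooth curve with P(0)=0 and P'(t) ≥ 0 for all t, and N : [0,1] → H(S₃) a smooth curve with N(0)=0 and N'(t) ≤ 0 for all t. Then the block-diagonal curve X(t) = P(t) ⊕ 0 ⊕ N(t) satisfies ∫₀¹‖X'(t)‖₁ dt = ‖X(1)‖₁, i.e., X is a minimal curve for the trace norm joining 0 to X(1). -/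
open scoped ComplexOrder

/-- The block-diagonal operator `P ⊕ 0 ⊕ N` with respect to an orthogonal
decomposition `ℂⁿ = S₁ ⊕ S₂ ⊕ S₃`. -/
def blockDiag3 {m₁ m₂ m₃ : ℕ} (P : Matrix (Fin m₁) (Fin m₁) ℂ)
    (N : Matrix (Fin m₃) (Fin m₃) ℂ) :
    Matrix (Fin m₁ ⊕ (Fin m₂ ⊕ Fin m₃)) (Fin m₁ ⊕ (Fin m₂ ⊕ Fin m₃)) ℂ :=
  Matrix.fromBlocks P 0 0 (Matrix.fromBlocks (0 : Matrix (Fin m₂) (Fin m₂) ℂ) 0 0 N)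

open Matrix

noncomputable def Matrix.PosSemidef.sqrt {n : Type*} [Fintype n] [DecidableEq n]
    {A : Matrix n n ℂ} (hA : A.PosSemidef) : Matrix n n ℂ :=
  (hA.1.eigenvectorUnitary : Matrix n n ℂ) *
    Matrix.diagonal (((↑) : ℝ → ℂ) ∘ (√·) ∘ hA.1.eigenvalues) *
    (star hA.1.eigenvectorUnitary : Matrix n n ℂ)

lemma traceNorm_eq {m p : Type*} [Fintype m] [Fintype p] [DecidableEq p]
    (A : Matrix m p ℂ) :
    traceNorm A = ((Matrix.posSemidef_conjTranspose_mul_self A).sqrt.trace).re := rfl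

section sqrtCFC
open scoped MatrixOrder

lemma Matrix.PosSemidef.sqrt_eq_cfc {n : Type*} [Fintype n] [DecidableEq n]
    {A : Matrix n n ℂ} (hA : A.PosSemidef) : hA.sqrt = CFC.sqrt A := by
  rw [CFC.sqrt_eq_cfc, cfc_nnreal_eq_real _ A hA.nonneg, hA.1.cfc_eq]
  simp only [IsHermitian.cfc, Unitary.conjStarAlgAut_apply, Matrix.PosSemidef.sqrt]
  have hf : (RCLike.ofReal ∘ (fun x : ℝ => ((NNReal.sqrt x.toNNReal : ℝ))) ∘ hA.1.eigenvalues :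
      n → ℂ) = Complex.ofReal ∘ (fun x => √x) ∘ hA.1.eigenvalues := by
    funext i
    simp only [Function.comp_apply, Real.coe_sqrt, Real.coe_toNNReal',
      max_eq_left (hA.eigenvalues_nonneg i)]
    rfl
  rw [hf]

lemma Matrix.PosSemidef.posSemidef_sqrt {n : Type*} [Fintype n] [DecidableEq n]
    {A : Matrix n n ℂ} (hA : A.PosSemidef) : hA.sqrt.PosSemidef := by
  rw [hA.sqrt_eq_cfc]
  exact (CFC.sqrt_nonneg A).posSemidef

lemma Matrix.PosSemidef.sqrt_mul_self {n : Type*} [Fintype n] [DecidableEq n]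
    {A : Matrix n n ℂ} (hA : A.PosSemidef) : hA.sqrt * hA.sqrt = A := by
  rw [hA.sqrt_eq_cfc]
  exact CFC.sqrt_mul_sqrt_self A hA.nonneg

lemma Matrix.PosSemidef.eq_sqrt_of_sq_eq {n : Type*} [Fintype n] [DecidableEq n]
    {B : Matrix n n ℂ} (hB : B.PosSemidef) {A : Matrix n n ℂ} (hA : A.PosSemidef)
    (h : B ^ 2 = A) : B = hA.sqrt := by
  rw [hA.sqrt_eq_cfc]
  exact (CFC.sqrt_unique (by rw [← pow_two, h]) hB.nonneg).symm

end sqrtCFC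

lemma sqrt_congr {n : Type*} [Fintype n] [DecidableEq n] {A B : Matrix n n ℂ}
    (hA : A.PosSemidef) (hB : B.PosSemidef) (h : A = B) : hA.sqrt = hB.sqrt := by
  subst h; rfl

lemma traceNorm_of_posSemidef {n : Type*} [Fintype n] [DecidableEq n] {A : Matrix n n ℂ}
    (hA : A.PosSemidef) : traceNorm A = A.trace.re := by
  have h : A = (Matrix.posSemidef_conjTranspose_mul_self A).sqrt :=
    hA.eq_sqrt_of_sq_eq _ (by rw [pow_two, hA.1])
  rw [traceNorm_eq, ← h]

lemma traceNorm_neg {n : Type*} [Fintype n] [DecidableEq n] (A : Matrix n n ℂ) :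
    traceNorm (-A) = traceNorm A := by
  rw [traceNorm_eq, traceNorm_eq,
    sqrt_congr (Matrix.posSemidef_conjTranspose_mul_self (-A))
      (Matrix.posSemidef_conjTranspose_mul_self A) (by simp)]

lemma blockDiag3_conjTranspose {m₁ m₂ m₃ : ℕ} (A : Matrix (Fin m₁) (Fin m₁) ℂ)
    (B : Matrix (Fin m₃) (Fin m₃) ℂ) :
    (blockDiag3 (m₂ := m₂) A B)ᴴ = blockDiag3 (m₂ := m₂) Aᴴ Bᴴ := by
  simp [blockDiag3, Matrix.fromBlocks_conjTranspose]

lemma blockDiag3_mul {m₁ m₂ m₃ : ℕ} (A C : Matrix (Fin m₁) (Fin m₁) ℂ)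
    (B D : Matrix (Fin m₃) (Fin m₃) ℂ) :
    blockDiag3 (m₂ := m₂) A B * blockDiag3 (m₂ := m₂) C D
      = blockDiag3 (m₂ := m₂) (A * C) (B * D) := by
  simp [blockDiag3, Matrix.fromBlocks_multiply]

lemma blockDiag3_trace {m₁ m₂ m₃ : ℕ} (A : Matrix (Fin m₁) (Fin m₁) ℂ)
    (B : Matrix (Fin m₃) (Fin m₃) ℂ) :
    (blockDiag3 (m₂ := m₂) A B).trace = A.trace + B.trace := by
  simp [blockDiag3, Matrix.trace, Matrix.diag, Fintype.sum_sum_type]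

lemma posSemidef_blockDiag3 {m₁ m₂ m₃ : ℕ} {A : Matrix (Fin m₁) (Fin m₁) ℂ}
    {B : Matrix (Fin m₃) (Fin m₃) ℂ} (hA : A.PosSemidef) (hB : B.PosSemidef) :
    (blockDiag3 (m₂ := m₂) A B).PosSemidef := by
  have h : blockDiag3 (m₂ := m₂) A B
      = (blockDiag3 (m₂ := m₂) hA.sqrt hB.sqrt)ᴴ * blockDiag3 (m₂ := m₂) hA.sqrt hB.sqrt := by
    rw [blockDiag3_conjTranspose, hA.posSemidef_sqrt.1, hB.posSemidef_sqrt.1, blockDiag3_mul,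
      hA.sqrt_mul_self, hB.sqrt_mul_self]
  rw [h]
  exact Matrix.posSemidef_conjTranspose_mul_self _

lemma traceNorm_blockDiag3 {m₁ m₂ m₃ : ℕ} (A : Matrix (Fin m₁) (Fin m₁) ℂ)
    (B : Matrix (Fin m₃) (Fin m₃) ℂ) :
    traceNorm (blockDiag3 (m₂ := m₂) A B) = traceNorm A + traceNorm B := by
  have hA := Matrix.posSemidef_conjTranspose_mul_self A
  have hB := Matrix.posSemidef_conjTranspose_mul_self B
  have hX := Matrix.posSemidef_conjTranspose_mul_self (blockDiag3 (m₂ := m₂) A B)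
  have hM : (blockDiag3 (m₂ := m₂) hA.sqrt hB.sqrt).PosSemidef :=
    posSemidef_blockDiag3 hA.posSemidef_sqrt hB.posSemidef_sqrt
  have hsq : blockDiag3 (m₂ := m₂) hA.sqrt hB.sqrt ^ 2
      = (blockDiag3 (m₂ := m₂) A B)ᴴ * blockDiag3 (m₂ := m₂) A B := by
    rw [pow_two, blockDiag3_mul, hA.sqrt_mul_self, hB.sqrt_mul_self,
      blockDiag3_conjTranspose, blockDiag3_mul]
  have h := hM.eq_sqrt_of_sq_eq hX hsq
  rw [traceNorm_eq, traceNorm_eq, traceNorm_eq, ← h, blockDiag3_trace, Complex.add_re]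

lemma herm_quad_real {n : Type*} [Fintype n] {A : Matrix n n ℂ} (hA : A.IsHermitian)
    (x : n → ℂ) : (star x ⬝ᵥ A.mulVec x).im = 0 := by
  have h : star (star x ⬝ᵥ A.mulVec x) = star x ⬝ᵥ A.mulVec x :=
    calc star (star x ⬝ᵥ A.mulVec x) = star (A.mulVec x) ⬝ᵥ x :=
          (Matrix.star_dotProduct _ _).symm
      _ = (star x ᵥ* Aᴴ) ⬝ᵥ x := by rw [Matrix.star_mulVec]
      _ = star x ⬝ᵥ Aᴴ.mulVec x := (Matrix.dotProduct_mulVec _ _ _).symm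
      _ = star x ⬝ᵥ A.mulVec x := by rw [hA.eq]
  have h2 := congrArg Complex.im h
  simp only [Complex.star_def, Complex.conj_im] at h2
  linarith


lemma hasDerivAt_quad {m : ℕ} (P P' : ℝ → Matrix (Fin m) (Fin m) ℂ)
    (hderiv : ∀ t i j, HasDerivAt (fun s => P s i j) (P' t i j) t) (x : Fin m → ℂ) (t : ℝ) :
    HasDerivAt (fun s => (star x ⬝ᵥ (P s).mulVec x).re) ((star x ⬝ᵥ (P' t).mulVec x).re) t := by
  have hg : HasDerivAt (fun s => star x ⬝ᵥ (P s).mulVec x) (star x ⬝ᵥ (P' t).mulVec x) t := by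
    simp only [dotProduct, Matrix.mulVec]
    exact HasDerivAt.fun_sum fun i _ =>
      ((HasDerivAt.fun_sum fun j _ => (hderiv t i j).mul_const (x j)).const_mul (star x i))
  have h := Complex.reCLM.hasFDerivAt.comp_hasDerivAt t hg
  simp only [Function.comp_def, Complex.reCLM_apply] at h
  exact h

lemma continuous_quad {m : ℕ} {M : ℝ → Matrix (Fin m) (Fin m) ℂ}
    (hc : ∀ i j, Continuous fun t => M t i j) (x : Fin m → ℂ) :
    Continuous fun t => (star x ⬝ᵥ (M t).mulVec x).re := by
  simp only [dotProduct, Matrix.mulVec]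
  exact Complex.continuous_re.comp (continuous_finset_sum _ fun i _ =>
    (continuous_const.mul (continuous_finset_sum _ fun j _ => (hc i j).mul continuous_const)))

lemma posSemidef_one_of_deriv {m : ℕ} (P P' : ℝ → Matrix (Fin m) (Fin m) ℂ)
    (hderiv : ∀ t i j, HasDerivAt (fun s => P s i j) (P' t i j) t)
    (hcont : ∀ i j, Continuous fun t => P' t i j)
    (hherm : (P 1).IsHermitian) (h0 : P 0 = 0)
    (h' : ∀ t ∈ Set.Icc (0:ℝ) 1, (P' t).PosSemidef) : (P 1).PosSemidef := by
  refine Matrix.PosSemidef.of_dotProduct_mulVec_nonneg hherm fun x => ?_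
  have key : (∫ t in (0:ℝ)..1, (star x ⬝ᵥ (P' t).mulVec x).re)
      = (star x ⬝ᵥ (P 1).mulVec x).re - (star x ⬝ᵥ (P 0).mulVec x).re :=
    intervalIntegral.integral_eq_sub_of_hasDerivAt
      (fun t _ => hasDerivAt_quad P P' hderiv x t)
      ((continuous_quad hcont x).intervalIntegrable 0 1)
  have h0' : (star x ⬝ᵥ (P 0).mulVec x) = 0 := by simp [h0]
  have hnn : 0 ≤ (star x ⬝ᵥ (P 1).mulVec x).re := by
    have : (∫ t in (0:ℝ)..1, (star x ⬝ᵥ (P' t).mulVec x).re)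
        = (star x ⬝ᵥ (P 1).mulVec x).re := by rw [key, h0']; simp
    rw [← this]
    apply intervalIntegral.integral_nonneg (by norm_num)
    intro u hu
    have h2 := (h' u hu).dotProduct_mulVec_nonneg x
    rw [Complex.nonneg_iff] at h2
    exact h2.1
  rw [Complex.nonneg_iff]
  exact ⟨hnn, (herm_quad_real hherm x).symm⟩

/-- If `P : [0,1] → H(S₁)` is a smooth curve with `P(0) = 0` and `P'(t) ≥ 0`, and
`N : [0,1] → H(S₃)` is a smooth curve with `N(0) = 0` and `N'(t) ≤ 0`, then the
block-diagonal curve `X(t) = P(t) ⊕ 0 ⊕ N(t)` has trace-norm length `‖X(1)‖₁`,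
i.e. it is a minimal curve joining `0` to `X(1)`. -/
theorem blockDiag_curve_minimal {m₁ m₂ m₃ : ℕ}
    (P P' : ℝ → Matrix (Fin m₁) (Fin m₁) ℂ)
    (N N' : ℝ → Matrix (Fin m₃) (Fin m₃) ℂ)
    (hPsmooth : ∀ i j, ContDiff ℝ (⊤ : ℕ∞) fun t => P t i j)
    (hNsmooth : ∀ i j, ContDiff ℝ (⊤ : ℕ∞) fun t => N t i j)
    (hPderiv : ∀ t i j, HasDerivAt (fun s => P s i j) (P' t i j) t)
    (hNderiv : ∀ t i j, HasDerivAt (fun s => N s i j) (N' t i j) t)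
    (hPherm : ∀ t, (P t).IsHermitian)
    (hNherm : ∀ t, (N t).IsHermitian)
    (hP0 : P 0 = 0) (hN0 : N 0 = 0)
    (hP' : ∀ t ∈ Set.Icc (0:ℝ) 1, (P' t).PosSemidef)
    (hN' : ∀ t ∈ Set.Icc (0:ℝ) 1, (-(N' t)).PosSemidef) :
    (∫ t in (0:ℝ)..1, traceNorm (blockDiag3 (m₂ := m₂) (P' t) (N' t))) =
      traceNorm (blockDiag3 (m₂ := m₂) (P 1) (N 1)) := by
  have hP'cont : ∀ i j, Continuous fun t => P' t i j := by
    intro i j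
    have h : (fun t => P' t i j) = deriv (fun s => P s i j) :=
      funext fun t => ((hPderiv t i j).deriv).symm
    rw [h]; exact (hPsmooth i j).continuous_deriv (by simp)
  have hN'cont : ∀ i j, Continuous fun t => N' t i j := by
    intro i j
    have h : (fun t => N' t i j) = deriv (fun s => N s i j) :=
      funext fun t => ((hNderiv t i j).deriv).symm
    rw [h]; exact (hNsmooth i j).continuous_deriv (by simp)
  have hP1 : (P 1).PosSemidef := posSemidef_one_of_deriv P P' hPderiv hP'cont (hPherm 1) hP0 hP'
  have hN1 : (-(N 1)).PosSemidef := by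
    refine posSemidef_one_of_deriv (fun t => -(N t)) (fun t => -(N' t))
      (fun t i j => ?_) (fun i j => ?_) ((hNherm 1).neg) (by simp [hN0]) hN'
    · exact (hNderiv t i j).neg
    · exact (hN'cont i j).neg
  -- rewrite integrand on [0,1]
  have hEq : Set.EqOn (fun t => traceNorm (blockDiag3 (m₂ := m₂) (P' t) (N' t)))
      (fun t => (P' t).trace.re - (N' t).trace.re) (Set.uIcc (0:ℝ) 1) := by
    intro t ht
    rw [Set.uIcc_of_le (by norm_num : (0:ℝ) ≤ 1)] at ht
    have h1 := hP' t ht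
    have h2 := hN' t ht
    simp only
    rw [traceNorm_blockDiag3, traceNorm_of_posSemidef h1, ← traceNorm_neg (N' t),
      traceNorm_of_posSemidef h2, Matrix.trace_neg, Complex.neg_re]
    ring
  rw [intervalIntegral.integral_congr hEq]
  -- fundamental theorem of calculus for the trace
  have htr : ∀ t : ℝ, HasDerivAt (fun s => (P s).trace.re - (N s).trace.re)
      ((P' t).trace.re - (N' t).trace.re) t := by
    intro t
    have hPt : HasDerivAt (fun s => (P s).trace) ((P' t).trace) t := by
      simp only [Matrix.trace, Matrix.diag]
      exact HasDerivAt.fun_sum fun i _ => hPderiv t i i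
    have hNt : HasDerivAt (fun s => (N s).trace) ((N' t).trace) t := by
      simp only [Matrix.trace, Matrix.diag]
      exact HasDerivAt.fun_sum fun i _ => hNderiv t i i
    have h1 := Complex.reCLM.hasFDerivAt.comp_hasDerivAt t hPt
    have h2 := Complex.reCLM.hasFDerivAt.comp_hasDerivAt t hNt
    have h3 := h1.sub h2
    simp only [Function.comp_def, Complex.reCLM_apply] at h3
    exact h3
  have hcont : Continuous fun t => (P' t).trace.re - (N' t).trace.re := by
    apply Continuous.sub
    · exact Complex.continuous_re.comp (continuous_finset_sum _ fun i _ => hP'cont i i)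
    · exact Complex.continuous_re.comp (continuous_finset_sum _ fun i _ => hN'cont i i)
  have key : (∫ t in (0:ℝ)..1, ((P' t).trace.re - (N' t).trace.re))
      = ((P 1).trace.re - (N 1).trace.re) - ((P 0).trace.re - (N 0).trace.re) :=
    intervalIntegral.integral_eq_sub_of_hasDerivAt (fun t _ => htr t)
      (hcont.intervalIntegrable 0 1)
  rw [key, traceNorm_blockDiag3, traceNorm_of_posSemidef hP1, ← traceNorm_neg (N 1),
    traceNorm_of_posSemidef hN1, Matrix.trace_neg, Complex.neg_re, hP0, hN0]
  simp [sub_eq_add_neg]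
end
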